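/- arXiv:2204.00864 — 3 statements merged into one kernel-verified Lean document; each statement's English description precedes it below -/
import Mathlib

section
/- For any bounded operator a on a separable Hilbert space H with orthonormal basis {E_k}_{k≥0}, and the diagonal operator K defined by K E_k = k E_k, the operator norm ‖a(I+K)^N‖ is at most the Hilbert–Schmidt norm ‖a(I+K)^N‖_HS, which in turn is at most √(π²/6) · ‖a(I+K)^{N+1}‖. -/
open scoped ENNReal ComplexConjugate InnerProductSpace

noncomputable section

abbrev H : Type := lp (fun _ : ℕ => ℂ) 2

/-- The standard orthonormal basis vectors of `ℓ²(ℕ)`. -/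
def e (k : ℕ) : H := lp.single 2 k 1

/-- Matrix coefficients of a bounded operator. -/
def matA (a : H →L[ℂ] H) (k l : ℕ) : ℂ := ⟪e k, a (e l)⟫_ℂ

/-- Operator norm (possibly infinite) of a matrix, as the sup of bilinear pairings
against finitely supported vectors of norm at most one. -/
def opNormE (A : ℕ → ℕ → ℂ) : ℝ≥0∞ :=
  ⨆ (x : ℕ →₀ ℂ) (y : ℕ →₀ ℂ)
    (_ : ∑ l ∈ x.support, ‖x l‖ ^ 2 ≤ 1)
    (_ : ∑ k ∈ y.support, ‖y k‖ ^ 2 ≤ 1),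
    ENNReal.ofReal ‖∑ k ∈ y.support, ∑ l ∈ x.support, conj (y k) * A k l * x l‖

/-- Hilbert-Schmidt norm (possibly infinite) of a matrix. -/
def hsNormE (A : ℕ → ℕ → ℂ) : ℝ≥0∞ :=
  (∑' k : ℕ, ∑' l : ℕ, (‖A k l‖₊ : ℝ≥0∞) ^ 2) ^ ((1 : ℝ) / 2)

/-- The matrix of `a * (I + K)^N`, where `K` is the label operator `K E_k = k E_k`. -/
def wt (N : ℕ) (A : ℕ → ℕ → ℂ) : ℕ → ℕ → ℂ := fun k l => (1 + (l : ℂ)) ^ N * A k l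

/-- `‖a‖_{0,N} = ‖a (I+K)^N‖`. -/
def norm0N (A : ℕ → ℕ → ℂ) (N : ℕ) : ℝ≥0∞ := opNormE (wt N A)

/-- The matrix of `δ_K(a) = [K, a]`. -/
def deltaK (A : ℕ → ℕ → ℂ) : ℕ → ℕ → ℂ := fun k l => ((k : ℂ) - (l : ℂ)) * A k l

/-- `‖a‖_{M,N} = ∑_{j=0}^M C(M,j) ‖δ_K^j(a)‖_{0,N}`. -/
def normMN (A : ℕ → ℕ → ℂ) (M N : ℕ) : ℝ≥0∞ :=
  ∑ j ∈ Finset.range (M + 1), (Nat.choose M j : ℝ≥0∞) * norm0N (deltaK^[j] A) N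

/-- Rapid decay of a matrix: the smooth compact operators `K^∞` are the operators
whose matrix has this property. -/
def IsRD (A : ℕ → ℕ → ℂ) : Prop :=
  ∀ M N : ℕ, ∃ C : ℝ, ∀ k l : ℕ, (1 + (k : ℝ)) ^ M * (1 + (l : ℝ)) ^ N * ‖A k l‖ ≤ C

/-!
Cauchy–Schwarz on the double sum `∑ k l, conj (y k) * A k l * x l` bounds the operator norm by the
Hilbert–Schmidt norm. For the second inequality, column `l` of `a(I+K)^{N+1}` is `1 + l` times
column `l` of `a(I+K)^N`, and every column has `ℓ²`-norm at most the operator norm; summing the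
squared columns with weights `(1 + l)⁻²` gives the factor `∑ (1 + l)⁻² = ζ(2) = π²/6`.
-/

open Real

def pairing (A : ℕ → ℕ → ℂ) (x y : ℕ →₀ ℂ) : ℂ :=
  ∑ k ∈ y.support, ∑ l ∈ x.support, conj (y k) * A k l * x l

lemma le_opNormE {A : ℕ → ℕ → ℂ} {x y : ℕ →₀ ℂ} (hx : ∑ l ∈ x.support, ‖x l‖ ^ 2 ≤ 1)
    (hy : ∑ k ∈ y.support, ‖y k‖ ^ 2 ≤ 1) : ENNReal.ofReal ‖pairing A x y‖ ≤ opNormE A :=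
  le_iSup_of_le x <| le_iSup_of_le y <| le_iSup_of_le hx <| le_iSup_of_le hy le_rfl

lemma opNormE_le {A : ℕ → ℕ → ℂ} {c : ℝ≥0∞}
    (h : ∀ x y : ℕ →₀ ℂ, ∑ l ∈ x.support, ‖x l‖ ^ 2 ≤ 1 → ∑ k ∈ y.support, ‖y k‖ ^ 2 ≤ 1 →
      ENNReal.ofReal ‖pairing A x y‖ ≤ c) :
    opNormE A ≤ c :=
  iSup_le fun x => iSup_le fun y => iSup_le fun hx => iSup_le fun hy => h x y hx hy

lemma pairing_eq_sum_of_subset (A : ℕ → ℕ → ℂ) {x y : ℕ →₀ ℂ} {s t : Finset ℕ}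
    (hy : y.support ⊆ s) (hx : x.support ⊆ t) :
    pairing A x y = ∑ k ∈ s, ∑ l ∈ t, conj (y k) * A k l * x l := by
  rw [pairing, Finset.sum_subset hy fun k _ hk => by simp [Finsupp.notMem_support_iff.mp hk]]
  exact Finset.sum_congr rfl fun k _ =>
    Finset.sum_subset hx fun l _ hl => by simp [Finsupp.notMem_support_iff.mp hl]

lemma norm_sum_sum_conj_mul_mul_sq_le {ι κ : Type*} (s : Finset ι) (t : Finset κ)
    (A : ι → κ → ℂ) (x : κ → ℂ) (y : ι → ℂ) :
    ‖∑ k ∈ s, ∑ l ∈ t, conj (y k) * A k l * x l‖ ^ 2 ≤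
      (∑ k ∈ s, ‖y k‖ ^ 2) * (∑ l ∈ t, ‖x l‖ ^ 2) * ∑ k ∈ s, ∑ l ∈ t, ‖A k l‖ ^ 2 := by
  have triangle : ‖∑ k ∈ s, ∑ l ∈ t, conj (y k) * A k l * x l‖ ≤
      ∑ p ∈ s ×ˢ t, ‖y p.1‖ * ‖x p.2‖ * ‖A p.1 p.2‖ := by
    rw [Finset.sum_product]
    refine (norm_sum_le _ _).trans (Finset.sum_le_sum fun k _ => ?_)
    refine (norm_sum_le _ _).trans (Finset.sum_le_sum fun l _ => le_of_eq ?_)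
    rw [norm_mul, norm_mul, RCLike.norm_conj]
    ring
  calc ‖∑ k ∈ s, ∑ l ∈ t, conj (y k) * A k l * x l‖ ^ 2
      ≤ (∑ p ∈ s ×ˢ t, ‖y p.1‖ * ‖x p.2‖ * ‖A p.1 p.2‖) ^ 2 :=
        pow_le_pow_left₀ (norm_nonneg _) triangle 2
    _ ≤ (∑ p ∈ s ×ˢ t, (‖y p.1‖ * ‖x p.2‖) ^ 2) * ∑ p ∈ s ×ˢ t, ‖A p.1 p.2‖ ^ 2 :=
        Finset.sum_mul_sq_le_sq_mul_sq _ _ _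
    _ = _ := by simp only [Finset.sum_product, Finset.sum_mul_sum, mul_pow]

lemma ofReal_sum_norm_sq {ι E : Type*} [SeminormedAddGroup E] (s : Finset ι) (f : ι → E) :
    ENNReal.ofReal (∑ i ∈ s, ‖f i‖ ^ 2) = ∑ i ∈ s, (‖f i‖₊ : ℝ≥0∞) ^ 2 := by
  rw [ENNReal.ofReal_sum_of_nonneg fun _ _ => sq_nonneg _]
  exact Finset.sum_congr rfl fun i _ => by rw [ENNReal.ofReal_pow (norm_nonneg _), ofReal_norm, enorm_eq_nnnorm]

lemma le_hsNormE_iff (A : ℕ → ℕ → ℂ) (c : ℝ≥0∞) :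
    c ≤ hsNormE A ↔ c ^ 2 ≤ ∑' k : ℕ, ∑' l : ℕ, (‖A k l‖₊ : ℝ≥0∞) ^ 2 := by
  rw [hsNormE, one_div, ENNReal.le_rpow_inv_iff two_pos, ENNReal.rpow_two]

lemma hsNormE_le_iff (A : ℕ → ℕ → ℂ) (c : ℝ≥0∞) :
    hsNormE A ≤ c ↔ ∑' k : ℕ, ∑' l : ℕ, (‖A k l‖₊ : ℝ≥0∞) ^ 2 ≤ c ^ 2 := by
  rw [hsNormE, one_div, ENNReal.rpow_inv_le_iff two_pos, ENNReal.rpow_two]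

theorem opNormE_le_hsNormE (A : ℕ → ℕ → ℂ) : opNormE A ≤ hsNormE A := by
  refine opNormE_le fun x y hx hy => (le_hsNormE_iff A _).2 ?_
  have cauchy_schwarz : ‖pairing A x y‖ ^ 2 ≤ ∑ k ∈ y.support, ∑ l ∈ x.support, ‖A k l‖ ^ 2 := by
    refine (norm_sum_sum_conj_mul_mul_sq_le _ _ A x y).trans ?_
    exact mul_le_of_le_one_left (by positivity) (mul_le_one₀ hy (by positivity) hx)
  calc ENNReal.ofReal ‖pairing A x y‖ ^ 2
      = ENNReal.ofReal (‖pairing A x y‖ ^ 2) := (ENNReal.ofReal_pow (norm_nonneg _) 2).symm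
    _ ≤ ENNReal.ofReal (∑ k ∈ y.support, ∑ l ∈ x.support, ‖A k l‖ ^ 2) :=
        ENNReal.ofReal_le_ofReal cauchy_schwarz
    _ = ∑ k ∈ y.support, ∑ l ∈ x.support, (‖A k l‖₊ : ℝ≥0∞) ^ 2 := by
        rw [ENNReal.ofReal_sum_of_nonneg fun _ _ => by positivity]
        simp only [ofReal_sum_norm_sq]
    _ ≤ ∑' k : ℕ, ∑' l : ℕ, (‖A k l‖₊ : ℝ≥0∞) ^ 2 :=
        (Finset.sum_le_sum fun k _ => ENNReal.sum_le_tsum _).trans (ENNReal.sum_le_tsum _)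

theorem tsum_nnnorm_sq_le_opNormE_sq (B : ℕ → ℕ → ℂ) (l : ℕ) :
    ∑' k : ℕ, (‖B k l‖₊ : ℝ≥0∞) ^ 2 ≤ opNormE B ^ 2 := by
  refine ENNReal.tsum_eq_iSup_sum ▸ iSup_le fun S => ?_
  rw [← ofReal_sum_norm_sq]
  set u := ∑ k ∈ S, ‖B k l‖ ^ 2
  suffices h : ENNReal.ofReal √u ≤ opNormE B by
    calc ENNReal.ofReal u = ENNReal.ofReal √u ^ 2 := by
          rw [← ENNReal.ofReal_pow (sqrt_nonneg _), sq_sqrt (by positivity)]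
      _ ≤ opNormE B ^ 2 := pow_le_pow_left' h 2
  rcases (by positivity : 0 ≤ u).eq_or_lt with hu | hu
  · simp [← hu]
  have hr : 0 < √u := sqrt_pos.2 hu
  -- test against `e_l` and the normalized column truncated to `S`
  let y : ℕ →₀ ℂ := Finsupp.indicator S fun k _ => B k l / √u
  have hyS : y.support ⊆ S := Finsupp.support_indicator_subset _ _
  have hy : ∀ k ∈ S, y k = B k l / √u := fun k hk => Finsupp.indicator_of_mem hk _
  have hy_sum : ∑ k ∈ y.support, ‖y k‖ ^ 2 = 1 := by
    rw [Finset.sum_subset hyS fun k _ hk => by simp [Finsupp.notMem_support_iff.mp hk]]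
    calc ∑ k ∈ S, ‖y k‖ ^ 2 = u / √u ^ 2 := by
          rw [Finset.sum_div]
          refine Finset.sum_congr rfl fun k hk => ?_
          rw [hy k hk, norm_div, div_pow, Complex.norm_real, norm_of_nonneg hr.le]
      _ = 1 := by rw [sq_sqrt hu.le, div_self hu.ne']
  have hpair : pairing B (Finsupp.single l 1) y = √u := by
    rw [pairing_eq_sum_of_subset B hyS Finsupp.support_single_subset]
    calc ∑ k ∈ S, ∑ l' ∈ {l}, conj (y k) * B k l' * Finsupp.single l 1 l'
        = ∑ k ∈ S, ((‖B k l‖ ^ 2 / √u : ℝ) : ℂ) := by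
          refine Finset.sum_congr rfl fun k hk => ?_
          rw [Finset.sum_singleton, Finsupp.single_eq_same, mul_one, hy k hk, map_div₀,
            Complex.conj_ofReal, div_mul_eq_mul_div, RCLike.conj_mul]
          push_cast
          rfl
      _ = ((u / √u : ℝ) : ℂ) := by rw [Finset.sum_div]; push_cast; rfl
      _ = √u := by rw [div_sqrt]
  have := le_opNormE (A := B) (x := Finsupp.single l 1) (y := y) (by simp) hy_sum.le
  rwa [hpair, Complex.norm_real, norm_of_nonneg hr.le] at this

theorem ENNReal.tsum_inv_natCast_add_one_sq :
    ∑' l : ℕ, ((l : ℝ≥0∞) + 1)⁻¹ ^ 2 = ENNReal.ofReal (π ^ 2 / 6) := by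
  have basel : HasSum (fun l : ℕ => ((l : ℝ) + 1)⁻¹ ^ 2) (π ^ 2 / 6) := by
    simpa using (hasSum_nat_add_iff' 1).2 hasSum_zeta_two
  rw [← basel.tsum_eq, ENNReal.ofReal_tsum_of_nonneg (fun _ => by positivity) basel.summable]
  refine tsum_congr fun l => ?_
  rw [ENNReal.ofReal_pow (by positivity), ENNReal.ofReal_inv_of_pos (by positivity)]
  norm_cast

lemma nnnorm_wt_succ (A : ℕ → ℕ → ℂ) (N k l : ℕ) :
    (‖wt (N + 1) A k l‖₊ : ℝ≥0∞) = ((l : ℝ≥0∞) + 1) * ‖wt N A k l‖₊ := by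
  have h : wt (N + 1) A k l = ((l + 1 : ℕ) : ℂ) * wt N A k l := by
    simp only [wt, pow_succ]
    push_cast
    ring
  rw [h, nnnorm_mul, ENNReal.coe_mul, RCLike.nnnorm_natCast]
  norm_cast

theorem hsNormE_wt_le (A : ℕ → ℕ → ℂ) (N : ℕ) :
    hsNormE (wt N A) ≤ ENNReal.ofReal √(π ^ 2 / 6) * opNormE (wt (N + 1) A) := by
  rw [hsNormE_le_iff, mul_pow, ← ENNReal.ofReal_pow (sqrt_nonneg _), sq_sqrt (by positivity),
    ← ENNReal.tsum_inv_natCast_add_one_sq, ← ENNReal.tsum_mul_right, ENNReal.tsum_comm]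
  refine ENNReal.tsum_le_tsum fun l => ?_
  have hl : ((l : ℝ≥0∞) + 1)⁻¹ * ((l : ℝ≥0∞) + 1) = 1 :=
    ENNReal.inv_mul_cancel (by positivity) (by simp)
  calc ∑' k : ℕ, (‖wt N A k l‖₊ : ℝ≥0∞) ^ 2
      = ((l : ℝ≥0∞) + 1)⁻¹ ^ 2 * ∑' k : ℕ, (‖wt (N + 1) A k l‖₊ : ℝ≥0∞) ^ 2 := by
        rw [← ENNReal.tsum_mul_left]
        refine tsum_congr fun k => ?_
        rw [nnnorm_wt_succ, mul_pow, ← mul_assoc, ← mul_pow, hl, one_pow, one_mul]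
    _ ≤ ((l : ℝ≥0∞) + 1)⁻¹ ^ 2 * opNormE (wt (N + 1) A) ^ 2 :=
        mul_le_mul_right (tsum_nnnorm_sq_le_opNormE_sq _ l) _

/-- For a bounded operator `a` on `ℓ²(ℕ)` and the label operator `K E_k = k E_k`:
`‖a(I+K)^N‖ ≤ ‖a(I+K)^N‖_HS ≤ √(π²/6) ⬝ ‖a(I+K)^{N+1}‖`, all values in `[0,∞]`. -/
theorem stmt0 (a : H →L[ℂ] H) (N : ℕ) :
    opNormE (wt N (matA a)) ≤ hsNormE (wt N (matA a)) ∧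
    hsNormE (wt N (matA a)) ≤
      ENNReal.ofReal (Real.sqrt (Real.pi ^ 2 / 6)) * opNormE (wt (N + 1) (matA a)) :=
  ⟨opNormE_le_hsNormE _, hsNormE_wt_le _ N⟩

end
end

section
/- If c is a smooth compact operator (rapidly decaying matrix coefficients with respect to {E_k}) and I+c is invertible as a bounded operator on H, then (I+c)^{−1} − I is also a smooth compact operator. -/
open scoped ENNReal ComplexConjugate InnerProductSpace

noncomputable section

/- Rows and columns of a matrix with rapid decay are rapidly decaying vectors of `ℓ²`, so in
`(I+c)⁻¹ - I = c (I+c)⁻¹ c - c` the coefficient `⟪c† E_k, (I+c)⁻¹ c E_l⟫` of the first term is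
bounded by `‖c† E_k‖ ‖(I+c)⁻¹‖ ‖c E_l‖`, which decays rapidly in `k` and in `l` separately. -/

lemma summable_one_div_one_add_sq : Summable fun m : ℕ => 1 / (1 + (m : ℝ)) ^ 2 := by
  refine ((summable_nat_add_iff 1).mpr (Real.summable_one_div_nat_pow.mpr one_lt_two)).congr
    fun m => ?_
  push_cast
  ring_nf

lemma lp.norm_two_le_of_forall_mul_norm_le {E : Type*} [NormedAddCommGroup E]
    (x : lp (fun _ : ℕ => E) 2) {D : ℝ} (h : ∀ m : ℕ, (1 + (m : ℝ)) * ‖x m‖ ≤ D) :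
    ‖x‖ ≤ √(∑' m : ℕ, 1 / (1 + (m : ℝ)) ^ 2) * D := by
  have hD : 0 ≤ D := (mul_nonneg (by positivity) (norm_nonneg _)).trans (h 0)
  refine lp.norm_le_of_forall_sum_le (by norm_num) (by positivity) fun s => ?_
  simp only [ENNReal.toReal_ofNat, Real.rpow_two]
  calc ∑ m ∈ s, ‖x m‖ ^ 2
      ≤ ∑ m ∈ s, D ^ 2 * (1 / (1 + (m : ℝ)) ^ 2) := by
        refine Finset.sum_le_sum fun m _ => ?_
        have hm : 0 < 1 + (m : ℝ) := by positivity
        rw [← div_eq_mul_one_div, le_div_iff₀ (by positivity), ← mul_pow]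
        gcongr
        linarith [h m]
    _ = D ^ 2 * ∑ m ∈ s, 1 / (1 + (m : ℝ)) ^ 2 := by rw [Finset.mul_sum]
    _ ≤ D ^ 2 * ∑' m : ℕ, 1 / (1 + (m : ℝ)) ^ 2 := by
        gcongr
        exact summable_one_div_one_add_sq.sum_le_tsum s fun m _ => by positivity
    _ = (√(∑' m : ℕ, 1 / (1 + (m : ℝ)) ^ 2) * D) ^ 2 := by
        rw [mul_pow, Real.sq_sqrt (tsum_nonneg fun m => by positivity), mul_comm]

lemma inner_e_left (m : ℕ) (x : H) : ⟪e m, x⟫_ℂ = x m := by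
  simp [e, lp.inner_single_left]

lemma matA_eq_apply_e (a : H →L[ℂ] H) (k l : ℕ) : matA a k l = a (e l) k :=
  inner_e_left k _

lemma matA_sub (a a' : H →L[ℂ] H) : matA (a - a') = matA a - matA a' := by
  ext k l
  simp [matA]

lemma matA_adjoint (a : H →L[ℂ] H) (k l : ℕ) :
    matA (ContinuousLinearMap.adjoint a) k l = conj (matA a l k) := by
  rw [matA, ContinuousLinearMap.adjoint_inner_right, ← inner_conj_symm, matA]

lemma IsRD.sub {A B : ℕ → ℕ → ℂ} (hA : IsRD A) (hB : IsRD B) : IsRD (A - B) := by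
  intro M N
  obtain ⟨C, hC⟩ := hA M N
  obtain ⟨C', hC'⟩ := hB M N
  refine ⟨C + C', fun k l => ?_⟩
  calc (1 + (k : ℝ)) ^ M * (1 + (l : ℝ)) ^ N * ‖(A - B) k l‖
      ≤ (1 + (k : ℝ)) ^ M * (1 + (l : ℝ)) ^ N * (‖A k l‖ + ‖B k l‖) := by
        gcongr
        exact norm_sub_le _ _
    _ ≤ C + C' := by linarith [hC k l, hC' k l]

lemma isRD_matA_adjoint {a : H →L[ℂ] H} (ha : IsRD (matA a)) :
    IsRD (matA (ContinuousLinearMap.adjoint a)) := by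
  intro M N
  obtain ⟨C, hC⟩ := ha N M
  refine ⟨C, fun k l => ?_⟩
  rw [matA_adjoint, Complex.norm_conj, mul_comm ((1 + (k : ℝ)) ^ M)]
  exact hC l k

lemma IsRD.exists_pow_mul_norm_apply_e_le {a : H →L[ℂ] H} (ha : IsRD (matA a)) (N : ℕ) :
    ∃ C : ℝ, ∀ l : ℕ, (1 + (l : ℝ)) ^ N * ‖a (e l)‖ ≤ C := by
  obtain ⟨C, hC⟩ := ha 1 N
  refine ⟨√(∑' m : ℕ, 1 / (1 + (m : ℝ)) ^ 2) * C, fun l => ?_⟩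
  have hl : 0 < (1 + (l : ℝ)) ^ N := by positivity
  have hcol : ‖a (e l)‖ ≤ √(∑' m : ℕ, 1 / (1 + (m : ℝ)) ^ 2) * (C / (1 + (l : ℝ)) ^ N) := by
    refine lp.norm_two_le_of_forall_mul_norm_le _ fun m => ?_
    rw [le_div_iff₀ hl, ← matA_eq_apply_e]
    linarith [hC m l, pow_one (1 + (m : ℝ))]
  calc (1 + (l : ℝ)) ^ N * ‖a (e l)‖
      ≤ (1 + (l : ℝ)) ^ N * (√(∑' m : ℕ, 1 / (1 + (m : ℝ)) ^ 2) * (C / (1 + (l : ℝ)) ^ N)) := by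
        gcongr
    _ = √(∑' m : ℕ, 1 / (1 + (m : ℝ)) ^ 2) * C := by field_simp

lemma isRD_matA_mul_mul {a c : H →L[ℂ] H} (ha : IsRD (matA a)) (b : H →L[ℂ] H)
    (hc : IsRD (matA c)) : IsRD (matA (a * b * c)) := by
  intro M N
  obtain ⟨Ca, hCa⟩ := (isRD_matA_adjoint ha).exists_pow_mul_norm_apply_e_le M
  obtain ⟨Cc, hCc⟩ := hc.exists_pow_mul_norm_apply_e_le N
  have hCa0 : 0 ≤ Ca := (mul_nonneg (by positivity) (norm_nonneg _)).trans (hCa 0)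
  refine ⟨Ca * ‖b‖ * Cc, fun k l => ?_⟩
  have hcoef : matA (a * b * c) k l = ⟪ContinuousLinearMap.adjoint a (e k), b (c (e l))⟫_ℂ := by
    rw [ContinuousLinearMap.adjoint_inner_left]
    rfl
  calc (1 + (k : ℝ)) ^ M * (1 + (l : ℝ)) ^ N * ‖matA (a * b * c) k l‖
      ≤ (1 + (k : ℝ)) ^ M * (1 + (l : ℝ)) ^ N
          * (‖ContinuousLinearMap.adjoint a (e k)‖ * (‖b‖ * ‖c (e l)‖)) := by
        rw [hcoef]
        gcongr
        exact (norm_inner_le_norm _ _).trans (by gcongr; exact b.le_opNorm _)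
    _ = (1 + (k : ℝ)) ^ M * ‖ContinuousLinearMap.adjoint a (e k)‖ * ‖b‖
          * ((1 + (l : ℝ)) ^ N * ‖c (e l)‖) := by ring
    _ ≤ Ca * ‖b‖ * Cc := by gcongr; exacts [hCa k, hCc l]

/-- If `c` is a smooth compact operator and `I + c` is invertible in `B(H)`,
then `(I+c)⁻¹ - I` is a smooth compact operator. -/
theorem stmt7 (c : H →L[ℂ] H) (hc : IsRD (matA c))
    (b : H →L[ℂ] H) (hb1 : (1 + c) * b = 1) (hb2 : b * (1 + c) = 1) :
    IsRD (matA (b - 1)) := by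
  have hcb : c * b = 1 - b := eq_sub_of_add_eq' (by simpa [add_mul] using hb1)
  have hbc : b * c = 1 - b := eq_sub_of_add_eq' (by simpa [mul_add] using hb2)
  have hkey : b - 1 = c * b * c - c := by
    rw [hcb, sub_mul, one_mul, hbc]
    abel
  rw [hkey, matA_sub]
  exact (isRD_matA_mul_mul hc b hc).sub hc

end
end

section
/- If c ∈ K^∞ is self-adjoint and f is a smooth function on a neighborhood of the spectrum of c with f(0) = 0, then f(c) ∈ K^∞. -/
open scoped ENNReal ComplexConjugate InnerProductSpace

noncomputable section

instance instCFCRealH : ContinuousFunctionalCalculus ℝ (H →L[ℂ] H) IsSelfAdjoint :=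
  IsSelfAdjoint.instContinuousFunctionalCalculus

lemma coord_eq_inner (x : H) (k : ℕ) : ⟪e k, x⟫_ℂ = x k := by
  rw [e, lp.inner_single_left]; simp

lemma matA_eq (a : H →L[ℂ] H) (k l : ℕ) : matA a k l = (a (e l) : ∀ _ : ℕ, ℂ) k :=
  coord_eq_inner _ _

lemma hasSum_coord (x : H) : HasSum (fun j => (x j : ℂ) • e j) x := by
  have h := lp.hasSum_single ENNReal.ofNat_ne_top x
  convert h using 2 with j
  rw [e, ← lp.single_smul]; norm_num

lemma hasSum_apply_coord (a : H →L[ℂ] H) (x : H) (k : ℕ) :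
    HasSum (fun j => (x j : ℂ) * matA a k j) ((a x : ∀ _ : ℕ, ℂ) k) := by
  have h1 : HasSum (fun j => (x j : ℂ) • a (e j)) (a x) :=
    ((hasSum_coord x).mapL a).congr_fun (by intro j; simp)
  have h2 := h1.mapL (innerSL ℂ (e k))
  have e2 : ((innerSL ℂ (e k)) (a x)) = (a x : ∀ _ : ℕ, ℂ) k := coord_eq_inner _ _
  rw [e2] at h2
  refine h2.congr_fun (fun j => ?_)
  simp only [innerSL_apply_apply, inner_smul_right, matA_eq]
  rw [coord_eq_inner]

lemma matA_mul (a b : H →L[ℂ] H) (k l : ℕ) :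
    HasSum (fun j => matA a k j * matA b j l) (matA (a * b) k l) := by
  have h := hasSum_apply_coord a (b (e l)) k
  rw [matA_eq]
  have : ((a * b) (e l)) = a (b (e l)) := rfl
  rw [this]
  refine h.congr_fun (fun j => ?_)
  rw [matA_eq b j l, mul_comm]
lemma one_add_pos (k : ℕ) : (0:ℝ) < 1 + (k:ℝ) := by positivity

/-- A normalized version: bound in quotient form with nonneg constant. -/
lemma IsRD.bound {A : ℕ → ℕ → ℂ} (hA : IsRD A) (M N : ℕ) :
    ∃ C : ℝ, 0 ≤ C ∧ ∀ k l : ℕ, ‖A k l‖ ≤ C / ((1 + (k:ℝ)) ^ M * (1 + (l:ℝ)) ^ N) := by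
  obtain ⟨C, hC⟩ := hA M N
  refine ⟨max C 0, le_max_right _ _, fun k l => ?_⟩
  rw [le_div_iff₀ (by positivity)]
  calc ‖A k l‖ * ((1 + (k:ℝ)) ^ M * (1 + (l:ℝ)) ^ N)
      = (1 + (k:ℝ)) ^ M * (1 + (l:ℝ)) ^ N * ‖A k l‖ := by ring
    _ ≤ C := hC k l
    _ ≤ max C 0 := le_max_left _ _

lemma summable_inv_sq : Summable (fun j : ℕ => 1 / (1 + (j:ℝ)) ^ 2) := by
  have h : Summable (fun j : ℕ => 1 / ((j:ℝ)) ^ 2) := by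
    rw [Real.summable_one_div_nat_pow]; norm_num
  have := (summable_nat_add_iff 1).mpr h
  refine this.congr fun j => ?_
  push_cast; ring_nf

lemma isRD_matA_mul {a b : H →L[ℂ] H} (ha : IsRD (matA a)) (hb : IsRD (matA b)) :
    IsRD (matA (a * b)) := by
  intro M N
  obtain ⟨CA, hCA0, hCA⟩ := ha.bound M 2
  obtain ⟨CB, hCB0, hCB⟩ := hb.bound 0 N
  set S := ∑' j : ℕ, 1 / (1 + (j:ℝ)) ^ 2 with hS
  have hS0 : 0 ≤ S := tsum_nonneg (fun j => by positivity)
  refine ⟨CA * CB * S, fun k l => ?_⟩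
  have hbound : ∀ j : ℕ, ‖matA a k j * matA b j l‖ ≤
      (CA * CB / ((1 + (k:ℝ)) ^ M * (1 + (l:ℝ)) ^ N)) * (1 / (1 + (j:ℝ)) ^ 2) := by
    intro j
    rw [norm_mul]
    have h1 := hCA k j
    have h2 := hCB j l
    simp only [pow_zero, one_mul] at h2
    calc ‖matA a k j‖ * ‖matA b j l‖
        ≤ (CA / ((1 + (k:ℝ)) ^ M * (1 + (j:ℝ)) ^ 2)) * (CB / (1 + (l:ℝ)) ^ N) :=
          mul_le_mul h1 h2 (norm_nonneg _) (by positivity)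
      _ = (CA * CB / ((1 + (k:ℝ)) ^ M * (1 + (l:ℝ)) ^ N)) * (1 / (1 + (j:ℝ)) ^ 2) := by
          rw [div_mul_div_comm, div_mul_div_comm, mul_one]; ring_nf
  have hsum : Summable (fun j => ‖matA a k j * matA b j l‖) := by
    refine Summable.of_nonneg_of_le (fun j => norm_nonneg _) hbound ?_
    exact summable_inv_sq.mul_left _
  have heq : matA (a * b) k l = ∑' j, matA a k j * matA b j l :=
    (matA_mul a b k l).tsum_eq.symm
  rw [heq]
  have h3 : ‖∑' j, matA a k j * matA b j l‖ ≤
      (CA * CB / ((1 + (k:ℝ)) ^ M * (1 + (l:ℝ)) ^ N)) * S := by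
    calc ‖∑' j, matA a k j * matA b j l‖ ≤ ∑' j, ‖matA a k j * matA b j l‖ :=
          norm_tsum_le_tsum_norm hsum
      _ ≤ ∑' j : ℕ, (CA * CB / ((1 + (k:ℝ)) ^ M * (1 + (l:ℝ)) ^ N)) * (1 / (1 + (j:ℝ)) ^ 2) :=
          Summable.tsum_le_tsum hbound hsum (summable_inv_sq.mul_left _)
      _ = (CA * CB / ((1 + (k:ℝ)) ^ M * (1 + (l:ℝ)) ^ N)) * S := by rw [tsum_mul_left]
  calc (1 + (k:ℝ)) ^ M * (1 + (l:ℝ)) ^ N * ‖∑' j, matA a k j * matA b j l‖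
      ≤ (1 + (k:ℝ)) ^ M * (1 + (l:ℝ)) ^ N *
        ((CA * CB / ((1 + (k:ℝ)) ^ M * (1 + (l:ℝ)) ^ N)) * S) := by
        exact mul_le_mul_of_nonneg_left h3 (by positivity)
    _ = CA * CB * S := by field_simp

lemma colNorm_bound {a : H →L[ℂ] H} (ha : IsRD (matA a)) (N : ℕ) :
    ∃ C : ℝ, 0 ≤ C ∧ ∀ l : ℕ, ‖a (e l)‖ ≤ C / (1 + (l:ℝ)) ^ N := by
  obtain ⟨C₁, hC₁0, hC₁⟩ := ha.bound 1 N
  set S := ∑' j : ℕ, 1 / (1 + (j:ℝ)) ^ 2 with hS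
  have hS0 : 0 ≤ S := tsum_nonneg (fun j => by positivity)
  refine ⟨C₁ * Real.sqrt S, by positivity, fun l => ?_⟩
  have hentry : ∀ k : ℕ, ‖(a (e l) : ∀ _ : ℕ, ℂ) k‖ ^ 2 ≤
      (C₁ ^ 2 / ((1 + (l:ℝ)) ^ N) ^ 2) * (1 / (1 + (k:ℝ)) ^ 2) := by
    intro k
    have h1 : ‖(a (e l) : ∀ _ : ℕ, ℂ) k‖ ≤ C₁ / ((1 + (k:ℝ)) ^ 1 * (1 + (l:ℝ)) ^ N) := by
      rw [← matA_eq]; exact hC₁ k l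
    calc ‖(a (e l) : ∀ _ : ℕ, ℂ) k‖ ^ 2 ≤ (C₁ / ((1 + (k:ℝ)) ^ 1 * (1 + (l:ℝ)) ^ N)) ^ 2 :=
          pow_le_pow_left₀ (norm_nonneg _) h1 2
      _ = (C₁ ^ 2 / ((1 + (l:ℝ)) ^ N) ^ 2) * (1 / (1 + (k:ℝ)) ^ 2) := by
          rw [div_pow, div_mul_div_comm, mul_one, mul_pow]; ring_nf
  have hnorm2 : ‖a (e l)‖ ^ 2 = ∑' k : ℕ, ‖(a (e l) : ∀ _ : ℕ, ℂ) k‖ ^ 2 := by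
    have h := lp.norm_rpow_eq_tsum (p := 2) (by norm_num) (a (e l))
    have h2 : ((2:ℝ≥0∞)).toReal = ((2:ℕ):ℝ) := by norm_num
    rw [h2] at h
    simp only [Real.rpow_natCast] at h
    exact_mod_cast h
  have hsum : Summable (fun k : ℕ => ‖(a (e l) : ∀ _ : ℕ, ℂ) k‖ ^ 2) := by
    have := lp.memℓp (a (e l))
    rw [memℓp_gen_iff (by norm_num)] at this
    have h2 : ((2:ℝ≥0∞)).toReal = ((2:ℕ):ℝ) := by norm_num
    rw [h2] at this
    simpa only [Real.rpow_natCast] using this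
  have key : ‖a (e l)‖ ^ 2 ≤ (C₁ * Real.sqrt S / (1 + (l:ℝ)) ^ N) ^ 2 := by
    rw [hnorm2]
    calc ∑' k : ℕ, ‖(a (e l) : ∀ _ : ℕ, ℂ) k‖ ^ 2
        ≤ ∑' k : ℕ, (C₁ ^ 2 / ((1 + (l:ℝ)) ^ N) ^ 2) * (1 / (1 + (k:ℝ)) ^ 2) :=
          Summable.tsum_le_tsum hentry hsum (summable_inv_sq.mul_left _)
      _ = (C₁ ^ 2 / ((1 + (l:ℝ)) ^ N) ^ 2) * S := by rw [tsum_mul_left]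
      _ = (C₁ * Real.sqrt S / (1 + (l:ℝ)) ^ N) ^ 2 := by
          rw [div_pow, mul_pow, Real.sq_sqrt hS0]; ring_nf
  have hb : (0:ℝ) ≤ C₁ * Real.sqrt S / (1 + (l:ℝ)) ^ N := by positivity
  exact (pow_le_pow_iff_left₀ (norm_nonneg _) hb (by norm_num)).mp key

open Filter Set in
lemma cont_at_zero {f : ℝ → ℝ} {s : Set ℝ} (hs : IsOpen s) (h0 : (0:ℝ) ∈ s)
    (hf : ContDiffOn ℝ (⊤ : ℕ∞) f s) (hf0 : f 0 = 0) :
    ContinuousAt (fun x : ℝ => if x = 0 then 0 else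
      (f x - deriv f 0 * x - deriv (deriv f) 0 / 2 * x ^ 2) / x ^ 2) 0 := by
  obtain ⟨r, hr0, hrs⟩ := Metric.isOpen_iff.mp hs 0 h0
  set a1 := deriv f 0
  set a2 := deriv (deriv f) 0
  set h : ℝ → ℝ := fun x => f x - a1 * x - a2 / 2 * x ^ 2 with hh
  set φ : ℝ → ℝ := fun x => deriv f x - a1 - a2 * x with hφ
  -- differentiability facts
  have hf1 : ContDiffOn ℝ (⊤ : ℕ∞) (deriv f) s := hf.deriv_of_isOpen hs (by simp)
  have hfd : ∀ x ∈ s, HasDerivAt f (deriv f x) x := fun x hx =>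
    (((hf.contDiffAt (hs.mem_nhds hx)).differentiableAt (by simp))).hasDerivAt
  have hfd1 : HasDerivAt (deriv f) a2 0 :=
    ((hf1.contDiffAt (hs.mem_nhds h0)).differentiableAt (by simp)).hasDerivAt
  have hhd : ∀ x ∈ s, HasDerivAt h (φ x) x := by
    intro x hx
    have h1 := (hfd x hx).sub ((hasDerivAt_id x).const_mul a1)
    have h2 := h1.sub (((hasDerivAt_pow 2 x)).const_mul (a2 / 2))
    refine h2.congr_deriv ?_
    simp [hφ]; ring
  have hφ0 : φ 0 = 0 := by simp [hφ, a1]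
  have hφd : HasDerivAt φ 0 0 := by
    have h1 := (hfd1.sub_const a1).sub ((hasDerivAt_id (0:ℝ)).const_mul a2)
    refine h1.congr_deriv ?_
    ring
  have hslope : Tendsto (fun ξ => φ ξ / ξ) (nhdsWithin 0 {(0:ℝ)}ᶜ) (nhds 0) := by
    have := hasDerivAt_iff_tendsto_slope.mp hφd
    refine this.congr' ?_
    filter_upwards [self_mem_nhdsWithin] with ξ hξ
    simp only [slope_def_field, hφ0]
    rw [div_eq_div_iff] <;> simp_all [sub_zero]
  -- epsilon-delta
  rw [Metric.continuousAt_iff]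
  intro ε hε
  rw [Metric.tendsto_nhdsWithin_nhds] at hslope
  obtain ⟨δ, hδ0, hδ⟩ := hslope ε hε
  refine ⟨min δ r, lt_min hδ0 hr0, fun {x} hx => ?_⟩
  by_cases hx0 : x = 0
  · simp [hx0, hε]
  · rw [Real.dist_eq, sub_zero] at hx
    have hxδ : |x| < δ := lt_of_lt_of_le hx (min_le_left _ _)
    have hxr : |x| < r := lt_of_lt_of_le hx (min_le_right _ _)
    have hmem : ∀ t : ℝ, |t| ≤ |x| → t ∈ s := by
      intro t ht
      apply hrs
      rw [Metric.mem_ball, Real.dist_eq, sub_zero]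
      exact lt_of_le_of_lt ht hxr
    have h00 : h 0 = 0 := by simp [hh, hf0]
    have key : ∃ ξ : ℝ, ξ ≠ 0 ∧ |ξ| < |x| ∧ φ ξ = h x / x := by
      rcases lt_or_gt_of_ne hx0 with hneg | hpos
      · obtain ⟨ξ, hξmem, hξ⟩ := exists_hasDerivAt_eq_slope h φ hneg
          (fun t ht => ((hhd t (hmem t (by
            rw [abs_le]; exact ⟨le_trans (neg_abs_le x) ht.1, le_trans ht.2 (abs_nonneg x)⟩))).continuousAt).continuousWithinAt)
          (fun t ht => hhd t (hmem t (by
            rw [abs_le]; exact ⟨le_trans (neg_abs_le x) ht.1.le, le_trans ht.2.le (abs_nonneg x)⟩)))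
        refine ⟨ξ, ?_, ?_, ?_⟩
        · exact ne_of_lt hξmem.2
        · rw [abs_of_neg hξmem.2, abs_of_neg hneg]
          linarith [hξmem.1]
        · rw [hξ, h00, zero_sub, zero_sub, neg_div_neg_eq]
      · obtain ⟨ξ, hξmem, hξ⟩ := exists_hasDerivAt_eq_slope h φ hpos
          (fun t ht => ((hhd t (hmem t (by
            rw [abs_le]; exact ⟨by linarith [ht.1, abs_nonneg x], le_trans ht.2 (le_abs_self x)⟩))).continuousAt).continuousWithinAt)
          (fun t ht => hhd t (hmem t (by
            rw [abs_le]; exact ⟨by linarith [ht.1.le, abs_nonneg x], le_trans ht.2.le (le_abs_self x)⟩)))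
        refine ⟨ξ, ne_of_gt hξmem.1, ?_, ?_⟩
        · rw [abs_of_pos hξmem.1, abs_of_pos hpos]; exact hξmem.2
        · rw [hξ, h00, sub_zero, sub_zero]
    obtain ⟨ξ, hξ0, hξx, hξeq⟩ := key
    have hquot : (h x) / x ^ 2 = φ ξ / x := by
      rw [pow_two, ← div_div, ← hξeq]
    have hgoal : dist (if x = 0 then (0:ℝ) else (f x - a1 * x - a2 / 2 * x ^ 2) / x ^ 2)
        (if (0:ℝ) = 0 then (0:ℝ) else (f 0 - a1 * 0 - a2 / 2 * 0 ^ 2) / 0 ^ 2) = |h x / x ^ 2| := by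
      rw [if_neg hx0, if_pos rfl, Real.dist_eq, sub_zero]
    rw [hgoal]
    have : |h x / x ^ 2| ≤ |φ ξ / ξ| := by
      rw [hquot, abs_div, abs_div]
      apply div_le_div_of_nonneg_left ?_ ?_ hξx.le |>.trans ?_
      · exact abs_nonneg _
      · exact abs_pos.mpr hξ0
      · exact le_rfl
    calc |h x / x ^ 2| ≤ |φ ξ / ξ| := this
      _ < ε := by
          have := hδ hξ0 (by rw [Real.dist_eq, sub_zero]; exact lt_trans hξx hxδ)
          rwa [Real.dist_eq, sub_zero] at this

lemma matA_add (a b : H →L[ℂ] H) (k l : ℕ) : matA (a + b) k l = matA a k l + matA b k l := by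
  simp [matA, inner_add_right]

lemma matA_smulR (r : ℝ) (a : H →L[ℂ] H) (k l : ℕ) : matA (r • a) k l = r • matA a k l := by
  rw [matA_eq, matA_eq]
  have h1 : ((r • a) (e l)) = r • (a (e l)) := rfl
  rw [h1, lp.coeFn_smul]
  rfl

set_option maxHeartbeats 1000000 in
/-- If `c` is a self-adjoint smooth compact operator and `f` is smooth on a neighborhood
of the spectrum of `c` with `f 0 = 0`, then `f(c)` (continuous functional calculus)
is a smooth compact operator. -/
theorem stmt10 (c : H →L[ℂ] H) (hc : IsRD (matA c)) (hsa : IsSelfAdjoint c)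
    (f : ℝ → ℝ) (s : Set ℝ) (hs : IsOpen s) (hspec : spectrum ℝ c ⊆ s)
    (hf : ContDiffOn ℝ (⊤ : ℕ∞) f s) (hf0 : f 0 = 0) :
    IsRD (matA (cfc f c)) := by
  set a1 := deriv f 0 with ha1
  set a2 := deriv (deriv f) 0 / 2 with ha2
  set g : ℝ → ℝ := fun x => if x = 0 then 0 else (f x - a1 * x - a2 * x ^ 2) / x ^ 2 with hg
  have hgcont : ContinuousOn g (spectrum ℝ c) := by
    intro x hx
    by_cases hx0 : x = 0
    · subst hx0
      exact (cont_at_zero hs (hspec hx) hf hf0).continuousWithinAt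
    · apply ContinuousAt.continuousWithinAt
      have hxs := hspec hx
      have hcf : ContinuousAt f x := (hf.contDiffAt (hs.mem_nhds hxs)).continuousAt
      have hev : ∀ᶠ y in nhds x, g y = (f y - a1 * y - a2 * y ^ 2) / y ^ 2 := by
        filter_upwards [(isOpen_compl_singleton (x := (0:ℝ))).mem_nhds hx0] with y hy
        simp only [Set.mem_compl_iff, Set.mem_singleton_iff] at hy
        simp only [hg, if_neg hy]
      rw [continuousAt_congr hev]
      exact ((hcf.sub (by fun_prop)).sub (by fun_prop)).div (by fun_prop) (pow_ne_zero 2 hx0)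
  have hfc : ContinuousOn f (spectrum ℝ c) := (hf.continuousOn).mono hspec
  set G := cfc g c with hG
  have hdecomp : cfc f c = a1 • c + a2 • (c * c) + c * (G * c) := by
    have e1 : cfc f c = cfc (fun x : ℝ => (a1 * x + a2 * x ^ 2) + x * (g x * x)) c := by
      apply cfc_congr
      intro x _
      by_cases hx0 : x = 0
      · simp [hx0, hf0, hg]
      · simp only [hg, if_neg hx0]
        field_simp
        ring
    rw [e1]
    have hcont1 : ContinuousOn (fun x : ℝ => a1 * x + a2 * x ^ 2) (spectrum ℝ c) := by fun_prop
    have hcontgx : ContinuousOn (fun x : ℝ => g x * x) (spectrum ℝ c) :=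
      hgcont.mul continuousOn_id
    have hcont2 : ContinuousOn (fun x : ℝ => x * (g x * x)) (spectrum ℝ c) :=
      continuousOn_id.mul hcontgx
    rw [cfc_add c _ _ hcont1 hcont2]
    congr 1
    · rw [cfc_add c _ _ (by fun_prop) (by fun_prop)]
      congr 1
      · have := cfc_const_mul (R := ℝ) a1 (fun x : ℝ => x) c (by fun_prop)
        rw [this, cfc_id' ℝ c]
      · have := cfc_const_mul (R := ℝ) a2 (fun x : ℝ => x ^ 2) c (by fun_prop)
        rw [this, cfc_pow_id c 2, pow_two]
    · rw [cfc_mul (fun x : ℝ => x) (fun x : ℝ => g x * x) c (by fun_prop) hcontgx,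
        cfc_mul g (fun x : ℝ => x) c hgcont (by fun_prop), cfc_id' ℝ c]
  intro M N
  obtain ⟨C1, hC10, hC1⟩ := hc.bound M N
  obtain ⟨C2, hC20, hC2⟩ := (isRD_matA_mul hc hc).bound M N
  obtain ⟨DK, hDK0, hDK⟩ := colNorm_bound hc M
  obtain ⟨DL, hDL0, hDL⟩ := colNorm_bound hc N
  have hsym := ContinuousLinearMap.isSelfAdjoint_iff_isSymmetric.mp hsa
  refine ⟨|a1| * C1 + |a2| * C2 + DK * ‖G‖ * DL, fun k l => ?_⟩
  set wk := (1 + (k:ℝ)) ^ M with hwk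
  set wl := (1 + (l:ℝ)) ^ N with hwl
  have hwk0 : (0:ℝ) < wk := by positivity
  have hwl0 : (0:ℝ) < wl := by positivity
  have ht3 : ‖matA (c * (G * c)) k l‖ ≤ (DK * ‖G‖ * DL) / (wk * wl) := by
    have heq : matA (c * (G * c)) k l = ⟪c (e k), G (c (e l))⟫_ℂ := by
      have h1 : (c * (G * c)) (e l) = c (G (c (e l))) := by
        rw [ContinuousLinearMap.mul_apply, ContinuousLinearMap.mul_apply]
      rw [matA, h1]
      exact (hsym (e k) (G (c (e l)))).symm
    rw [heq]
    calc ‖⟪c (e k), G (c (e l))⟫_ℂ‖ ≤ ‖c (e k)‖ * ‖G (c (e l))‖ := norm_inner_le_norm _ _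
      _ ≤ (DK / wk) * (‖G‖ * (DL / wl)) := by
          apply mul_le_mul (hDK k) ?_ (norm_nonneg _) (by positivity)
          calc ‖G (c (e l))‖ ≤ ‖G‖ * ‖c (e l)‖ := G.le_opNorm _
            _ ≤ ‖G‖ * (DL / wl) := by
                exact mul_le_mul_of_nonneg_left (hDL l) (norm_nonneg _)
      _ = (DK * ‖G‖ * DL) / (wk * wl) := by
          rw [div_mul_eq_mul_div, mul_div_assoc', mul_div_assoc']
          rw [div_div]
          ring_nf
  have htotal : ‖matA (cfc f c) k l‖ ≤ (|a1| * C1 + |a2| * C2 + DK * ‖G‖ * DL) / (wk * wl) := by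
    rw [hdecomp, matA_add, matA_add, matA_smulR, matA_smulR]
    calc ‖a1 • matA c k l + a2 • matA (c * c) k l + matA (c * (G * c)) k l‖
        ≤ ‖a1 • matA c k l‖ + ‖a2 • matA (c * c) k l‖ + ‖matA (c * (G * c)) k l‖ :=
          norm_add₃_le
      _ ≤ |a1| * (C1 / (wk * wl)) + |a2| * (C2 / (wk * wl)) + (DK * ‖G‖ * DL) / (wk * wl) := by
          refine add_le_add (add_le_add ?_ ?_) ht3
          · rw [norm_smul, Real.norm_eq_abs]
            exact mul_le_mul_of_nonneg_left (hC1 k l) (abs_nonneg _)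
          · rw [norm_smul, Real.norm_eq_abs]
            exact mul_le_mul_of_nonneg_left (hC2 k l) (abs_nonneg _)
      _ = (|a1| * C1 + |a2| * C2 + DK * ‖G‖ * DL) / (wk * wl) := by
          rw [mul_div_assoc', mul_div_assoc', ← add_div, ← add_div]
  calc wk * wl * ‖matA (cfc f c) k l‖
      ≤ wk * wl * ((|a1| * C1 + |a2| * C2 + DK * ‖G‖ * DL) / (wk * wl)) :=
        mul_le_mul_of_nonneg_left htotal (by positivity)
    _ = |a1| * C1 + |a2| * C2 + DK * ‖G‖ * DL := by
        rw [mul_div_assoc', mul_div_cancel_left₀ _ (ne_of_gt (by positivity : (0:ℝ) < wk * wl))]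

end
end
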